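/- arXiv:2008.08846 — 2 statements merged into one kernel-verified Lean document; each statement's English description precedes it below -/
import Mathlib

section
/- Assume μ ≠ 0 and let λ ∈ [V₀ − 2μ, V₀ + 2μ]. Then there exists a sequence (φ_m) in 𝒦 such that ‖φ_m‖ = 1 for all m, ⟨φ, φ_m⟩ → 0 as m → ∞ for every φ ∈ 𝒦 (weak convergence to 0), and ‖(T − λ)φ_m‖ → 0 as m → ∞. -/
open MeasureTheory Filter Topology ComplexConjugate ContinuousLinearMap
open scoped ENNReal Real

noncomputable section

/-- `𝒦̃ = ℓ²(ℤⁿ; ℂ)`. -/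
abbrev Kt (n : ℕ) := lp (fun _ : (Fin n → ℤ) => ℂ) 2

/-- `𝒦 = ℓ²(ℤⁿ∖{0}; ℂ)`. -/
abbrev Ks (n : ℕ) := lp (fun _ : {x : Fin n → ℤ // x ≠ 0} => ℂ) 2

/-- `L` is the family of shift operators: `(L_j ψ)(x) = ψ(x + e_j)`. -/
def IsShift {n : ℕ} (L : Fin n → (Kt n →L[ℂ] Kt n)) : Prop :=
  ∀ (j : Fin n) (ψ : Kt n) (x : Fin n → ℤ), (L j ψ) x = ψ (x + Pi.single j 1)

/-- `ι : 𝒦 → 𝒦̃` is extension by zero. -/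
def IsIota {n : ℕ} (ι : Ks n →L[ℂ] Kt n) : Prop :=
  ∀ (φ : Ks n) (x : Fin n → ℤ), (ι φ) x = if h : x = 0 then 0 else φ ⟨x, h⟩

/-- The operator `T̃₀ = Σⱼ (μⱼ Lⱼ + conj(μⱼ) Lⱼ*) + V₀ I` on `𝒦̃`. -/
def T0op {n : ℕ} (μv : Fin n → ℂ) (V₀ : ℝ) (L : Fin n → (Kt n →L[ℂ] Kt n)) :
    Kt n →L[ℂ] Kt n :=
  (∑ j, (μv j • L j + (starRingEnd ℂ) (μv j) • ContinuousLinearMap.adjoint (L j)))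
    + (V₀ : ℂ) • ContinuousLinearMap.id ℂ (Kt n)

/-- The operator `T = ι* T̃₀ ι` on `𝒦`. -/
def Tops {n : ℕ} (μv : Fin n → ℂ) (V₀ : ℝ) (L : Fin n → (Kt n →L[ℂ] Kt n))
    (ι : Ks n →L[ℂ] Kt n) : Ks n →L[ℂ] Ks n :=
  ContinuousLinearMap.adjoint ι ∘L T0op μv V₀ L ∘L ι

/-- `e_j` as an element of `ℤⁿ∖{0}`. -/
def eV {n : ℕ} (j : Fin n) : {x : Fin n → ℤ // x ≠ 0} :=
  ⟨Pi.single j 1, by intro h; have := congrFun h j; simp at this⟩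

/-- `-e_j` as an element of `ℤⁿ∖{0}`. -/
def eV' {n : ℕ} (j : Fin n) : {x : Fin n → ℤ // x ≠ 0} :=
  ⟨-Pi.single j 1, by intro h; have := congrFun h j; simp at this⟩


/-!
A plane wave `x ↦ ∏ⱼ zⱼ ^ xⱼ` with `|zⱼ| = 1` is a generalized eigenfunction of `T̃₀` with
eigenvalue `V₀ + ∑ⱼ 2 Re (μⱼ zⱼ)`, and choosing the phases `zⱼ = e^{i(θ - arg μⱼ)}` makes this
any prescribed point `V₀ + 2μ cos θ` of `[V₀ - 2μ, V₀ + 2μ]`. Truncating the wave to a cube of side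
`m + 1` creates an error supported on the faces of the cube, so after normalization it is
`O(m^{-1/2})`. Cubes that are pairwise disjoint and avoid the origin give an orthonormal sequence,
hence a weakly null one by Bessel's inequality, which is fixed by `ι ι*`; applying `ι*` turns it
into the required sequence for `T = ι* T̃₀ ι`.
-/

open scoped InnerProductSpace

section IndicatorLp

variable {α : Type*} [DecidableEq α]

def indicatorLp (s : Finset α) (c : α → ℂ) : lp (fun _ : α => ℂ) 2 :=
  ∑ x ∈ s, lp.single 2 x (c x)

theorem indicatorLp_apply (s : Finset α) (c : α → ℂ) (x : α) :
    indicatorLp s c x = if x ∈ s then c x else 0 := by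
  simp only [indicatorLp, lp.coeFn_sum, Finset.sum_apply, lp.coeFn_single, Finset.sum_pi_single]

theorem norm_indicatorLp {s : Finset α} {c : α → ℂ} (hc : ∀ x ∈ s, ‖c x‖ = 1) :
    ‖indicatorLp s c‖ = √(s.card : ℝ) := by
  have h := lp.norm_sum_single (p := 2) (by norm_num) c s
  simp only [ENNReal.toReal_ofNat, Real.rpow_two] at h
  rw [← indicatorLp, Finset.sum_congr rfl fun x hx => by rw [hc x hx, one_pow]] at h
  rw [← Real.sqrt_sq (norm_nonneg _), h, Finset.sum_const, nsmul_one]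

theorem inner_indicatorLp_of_disjoint {s t : Finset α} (hst : Disjoint s t) (c d : α → ℂ) :
    ⟪indicatorLp s c, indicatorLp t d⟫_ℂ = 0 := by
  rw [lp.inner_eq_tsum]
  refine (tsum_congr fun x => ?_).trans tsum_zero
  rw [indicatorLp_apply, indicatorLp_apply]
  by_cases hs : x ∈ s
  · rw [if_neg (Finset.disjoint_left.1 hst hs), inner_zero_right]
  · rw [if_neg hs, inner_zero_left]

end IndicatorLp

theorem Orthonormal.tendsto_inner_right_zero {ι 𝕜 E : Type*} [RCLike 𝕜] [NormedAddCommGroup E]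
    [InnerProductSpace 𝕜 E] {v : ι → E} (hv : Orthonormal 𝕜 v) (x : E) :
    Tendsto (fun i => ⟪x, v i⟫_𝕜) cofinite (𝓝 0) := by
  have h := (hv.inner_products_summable (x := x)).tendsto_cofinite_zero
  rw [tendsto_zero_iff_norm_tendsto_zero]
  simpa [Function.comp_def, norm_inner_symm, Real.sqrt_sq (norm_nonneg _)] using
    (Real.continuous_sqrt.tendsto 0).comp h

section Shift

variable {n : ℕ} {L : Fin n → (Kt n →L[ℂ] Kt n)}

theorem IsShift.apply_single (hL : IsShift L) (j : Fin n) (x : Fin n → ℤ) (a : ℂ) :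
    L j (lp.single 2 x a) = lp.single 2 (x - Pi.single j 1) a := by
  ext y
  simp only [hL j, lp.single_apply, Pi.single_apply, eq_sub_iff_add_eq]

theorem IsShift.adjoint_apply (hL : IsShift L) (j : Fin n) (ψ : Kt n) (x : Fin n → ℤ) :
    adjoint (L j) ψ x = ψ (x - Pi.single j 1) := by
  have h := adjoint_inner_right (L j) (lp.single 2 x 1) ψ
  simpa [hL.apply_single, lp.inner_single_left] using h

end Shift

section PlaneWave

variable {n : ℕ} {z : Fin n → ℂ}

def planeWave (z : Fin n → ℂ) (x : Fin n → ℤ) : ℂ := ∏ j, z j ^ x j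

theorem norm_planeWave (hz : ∀ j, ‖z j‖ = 1) (x : Fin n → ℤ) : ‖planeWave z x‖ = 1 := by
  simp [planeWave, hz]

theorem planeWave_add_single (hz : ∀ j, z j ≠ 0) (x : Fin n → ℤ) (j : Fin n) (t : ℤ) :
    planeWave z (x + Pi.single j t) = z j ^ t * planeWave z x := by
  simp only [planeWave, Pi.add_apply, zpow_add₀ (hz _), Finset.prod_mul_distrib]
  rw [mul_comm, Fintype.prod_eq_single j fun k hk => by simp [hk]]
  simp

end PlaneWave

section Cube

variable {n : ℕ}

def cube (n : ℕ) (I : Finset ℤ) : Finset (Fin n → ℤ) := Fintype.piFinset fun _ => I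

def cubeSlab (n : ℕ) (I J : Finset ℤ) (j : Fin n) : Finset (Fin n → ℤ) :=
  Fintype.piFinset (Function.update (fun _ => I) j J)

theorem card_cube (I : Finset ℤ) : (cube n I).card = I.card ^ n :=
  Fintype.card_piFinset_const I n

theorem card_cubeSlab (I J : Finset ℤ) (j : Fin n) :
    (cubeSlab n I J j).card = J.card * I.card ^ (n - 1) := by
  simp [cubeSlab, Fintype.card_piFinset, Function.apply_update (fun _ => Finset.card),
    Finset.prod_update_of_mem, ← Finset.erase_eq, Finset.card_erase_of_mem]

theorem mem_cubeSlab_iff {I J : Finset ℤ} {j : Fin n} {x : Fin n → ℤ} :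
    x ∈ cubeSlab n I J j ↔ (∀ k ≠ j, x k ∈ I) ∧ x j ∈ J := by
  simp only [cubeSlab, Fintype.mem_piFinset, Function.update_apply]
  constructor
  · intro h
    exact ⟨fun k hk => by simpa [hk] using h k, by simpa using h j⟩
  · rintro ⟨hI, hJ⟩ k
    split_ifs with hk
    · exact hk ▸ hJ
    · exact hI k hk

theorem add_single_mem_cube_iff {I : Finset ℤ} {j : Fin n} {x : Fin n → ℤ} {t : ℤ} :
    x + Pi.single j t ∈ cube n I ↔ (∀ k ≠ j, x k ∈ I) ∧ x j + t ∈ I := by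
  simp only [cube, Fintype.mem_piFinset, Pi.add_apply, Pi.single_apply]
  constructor
  · intro h
    exact ⟨fun k hk => by simpa [hk] using h k, by simpa using h j⟩
  · rintro ⟨hI, hj⟩ k
    split_ifs with hk
    · exact hk ▸ hj
    · simpa using hI k hk

theorem disjoint_cube [Nonempty (Fin n)] {I J : Finset ℤ} (h : Disjoint I J) :
    Disjoint (cube n I) (cube n J) := by
  obtain ⟨j⟩ := ‹Nonempty (Fin n)›
  exact Finset.disjoint_left.2 fun x hI hJ =>
    Finset.disjoint_left.1 h (Fintype.mem_piFinset.1 hI j) (Fintype.mem_piFinset.1 hJ j)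

theorem mem_cube_iff {I : Finset ℤ} (j : Fin n) {x : Fin n → ℤ} :
    x ∈ cube n I ↔ (∀ k ≠ j, x k ∈ I) ∧ x j ∈ I := by
  simpa using add_single_mem_cube_iff (I := I) (j := j) (x := x) (t := 0)

theorem mem_cubeSlab_of_not_add_single_mem_cube_iff {a b t : ℤ} (ht : t = 1 ∨ t = -1)
    {j : Fin n} {x : Fin n → ℤ}
    (hx : ¬(x + Pi.single j t ∈ cube n (Finset.Icc a b) ↔ x ∈ cube n (Finset.Icc a b))) :
    x ∈ cubeSlab n (Finset.Icc a b) {a - 1, a, b, b + 1} j := by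
  rw [add_single_mem_cube_iff, mem_cube_iff j] at hx
  by_cases hI : ∀ k ≠ j, x k ∈ Finset.Icc a b
  · refine mem_cubeSlab_iff.2 ⟨hI, ?_⟩
    rw [eq_true hI, true_and, true_and, Finset.mem_Icc, Finset.mem_Icc] at hx
    simp only [Finset.mem_insert, Finset.mem_singleton]
    omega
  · simp only [hI, false_and, iff_self, not_true_eq_false] at hx

end Cube

section Defect

variable {n : ℕ} {z : Fin n → ℂ}

theorem norm_translate_sub_smul_planeWave_le (hz : ∀ j, ‖z j‖ = 1) (a b : ℤ) {j : Fin n} {t : ℤ}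
    (ht : t = 1 ∨ t = -1) (A : Kt n →L[ℂ] Kt n)
    (hA : ∀ ψ x, A ψ x = ψ (x + Pi.single j t)) :
    ‖A (indicatorLp (cube n (Finset.Icc a b)) (planeWave z))
        - z j ^ t • indicatorLp (cube n (Finset.Icc a b)) (planeWave z)‖
      ≤ 2 * √((Finset.Icc a b).card ^ (n - 1) : ℕ) := by
  set S := cubeSlab n (Finset.Icc a b) {a - 1, a, b, b + 1} j
  have hz0 : ∀ j, z j ≠ 0 := fun j h => by simpa [h] using hz j
  have hpoint : ∀ x, ‖(A (indicatorLp (cube n (Finset.Icc a b)) (planeWave z))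
        - z j ^ t • indicatorLp (cube n (Finset.Icc a b)) (planeWave z)) x‖
      ≤ ‖indicatorLp S (fun _ => 1) x‖ := by
    intro x
    have hS : _ → x ∈ S := mem_cubeSlab_of_not_add_single_mem_cube_iff ht
    simp only [lp.coeFn_sub, lp.coeFn_smul, Pi.sub_apply, Pi.smul_apply, hA, indicatorLp_apply,
      planeWave_add_single hz0, smul_eq_mul]
    by_cases h1 : x + Pi.single j t ∈ cube n (Finset.Icc a b) <;>
      by_cases h2 : x ∈ cube n (Finset.Icc a b) <;>
      simp_all [norm_planeWave hz]
  have hcard : (S.card : ℝ) ≤ 4 * ((Finset.Icc a b).card ^ (n - 1) : ℕ) := by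
    rw [card_cubeSlab]
    exact_mod_cast Nat.mul_le_mul_right _ Finset.card_le_four
  calc _ ≤ ‖indicatorLp S (fun _ => 1)‖ := lp.norm_mono (by norm_num) hpoint
    _ = √(S.card : ℝ) := norm_indicatorLp fun _ _ => norm_one
    _ ≤ √(4 * ((Finset.Icc a b).card ^ (n - 1) : ℕ)) := Real.sqrt_le_sqrt hcard
    _ = 2 * √((Finset.Icc a b).card ^ (n - 1) : ℕ) := by
      rw [Real.sqrt_mul (by norm_num), show (4 : ℝ) = 2 ^ 2 by norm_num,
        Real.sqrt_sq (by norm_num)]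

end Defect

theorem exists_unimodular_sum_eq {n : ℕ} (μv : Fin n → ℂ) {r : ℝ}
    (hr : |r| ≤ 2 * ∑ j, ‖μv j‖) :
    ∃ z : Fin n → ℂ, (∀ j, ‖z j‖ = 1) ∧ ∑ j, (μv j * z j + conj (μv j) * (z j)⁻¹) = r := by
  set s := ∑ j, ‖μv j‖
  set θ := Real.arccos (r / (2 * s))
  have hcos : 2 * s * Real.cos θ = r := by
    have hs0 : 0 ≤ s := Finset.sum_nonneg fun j _ => norm_nonneg (μv j)
    rcases hs0.eq_or_lt with hs | hs
    · have hr0 : r = 0 := by simpa [← hs] using hr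
      rw [← hs, hr0, mul_zero, zero_mul]
    · have hr' : |r / (2 * s)| ≤ 1 := by
        rw [abs_div, abs_of_pos (show 0 < 2 * s by linarith), div_le_one (by linarith)]
        exact hr
      rw [Real.cos_arccos (abs_le.1 hr').1 (abs_le.1 hr').2]
      field_simp
  set z : Fin n → ℂ := fun j => Complex.exp (↑(θ - Complex.arg (μv j)) * Complex.I)
  have hz : ∀ j, ‖z j‖ = 1 := fun j => Complex.norm_exp_ofReal_mul_I _
  have hμz : ∀ j, μv j * z j = ‖μv j‖ * Complex.exp (θ * Complex.I) := by
    intro j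
    conv_lhs => rw [← Complex.norm_mul_exp_arg_mul_I (μv j)]
    rw [mul_assoc, ← Complex.exp_add]
    push_cast
    ring_nf
  refine ⟨z, hz, ?_⟩
  have hterm : ∀ j, μv j * z j + conj (μv j) * (z j)⁻¹ = ((2 * ‖μv j‖ * Real.cos θ : ℝ) : ℂ) := by
    intro j
    rw [Complex.inv_eq_conj (hz j), ← map_mul, Complex.add_conj, hμz, Complex.re_ofReal_mul,
      Complex.exp_ofReal_mul_I_re]
    push_cast
    ring
  rw [Finset.sum_congr rfl fun j _ => hterm j, ← Complex.ofReal_sum, ← Finset.sum_mul,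
    ← Finset.mul_sum, hcos]

section T0op

variable {n : ℕ} {μv : Fin n → ℂ} {V₀ : ℝ} {L : Fin n → (Kt n →L[ℂ] Kt n)} {z : Fin n → ℂ}
  {lam : ℂ}

theorem T0op_sub_smul_eq (hlam : V₀ + ∑ j, (μv j * z j + conj (μv j) * (z j)⁻¹) = lam)
    (ψ : Kt n) :
    T0op μv V₀ L ψ - lam • ψ = ∑ j, (μv j • (L j ψ - z j • ψ)
      + conj (μv j) • (adjoint (L j) ψ - (z j)⁻¹ • ψ)) := by
  simp only [← hlam, T0op, add_apply, sum_apply, smul_apply, id_apply, add_smul, Finset.sum_smul,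
    smul_sub, Finset.sum_add_distrib, Finset.sum_sub_distrib, mul_smul]
  abel

theorem norm_T0op_planeWave_sub_le (hL : IsShift L) (hz : ∀ j, ‖z j‖ = 1)
    (hlam : V₀ + ∑ j, (μv j * z j + conj (μv j) * (z j)⁻¹) = lam) (a b : ℤ) :
    ‖T0op μv V₀ L (indicatorLp (cube n (Finset.Icc a b)) (planeWave z))
        - lam • indicatorLp (cube n (Finset.Icc a b)) (planeWave z)‖
      ≤ 4 * (∑ j, ‖μv j‖) * √((Finset.Icc a b).card ^ (n - 1) : ℕ) := by
  set u := indicatorLp (cube n (Finset.Icc a b)) (planeWave z)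
  set ε := √((Finset.Icc a b).card ^ (n - 1) : ℕ)
  have hfwd : ∀ j, ‖L j u - z j • u‖ ≤ 2 * ε := fun j => by
    simpa only [zpow_one] using
      norm_translate_sub_smul_planeWave_le hz a b (Or.inl rfl) (L j) (hL j)
  have hbwd : ∀ j, ‖adjoint (L j) u - (z j)⁻¹ • u‖ ≤ 2 * ε := fun j => by
    simpa only [zpow_neg, zpow_one] using
      norm_translate_sub_smul_planeWave_le hz a b (Or.inr rfl) (adjoint (L j))
      fun ψ x => by rw [hL.adjoint_apply, sub_eq_add_neg, ← Pi.single_neg]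
  rw [T0op_sub_smul_eq hlam, Finset.mul_sum, Finset.sum_mul]
  refine (norm_sum_le _ _).trans (Finset.sum_le_sum fun j _ => ?_)
  calc _ ≤ ‖μv j‖ * ‖L j u - z j • u‖ + ‖μv j‖ * ‖adjoint (L j) u - (z j)⁻¹ • u‖ := by
        refine (norm_add_le _ _).trans_eq ?_
        rw [norm_smul, norm_smul, Complex.norm_conj]
    _ ≤ ‖μv j‖ * (2 * ε) + ‖μv j‖ * (2 * ε) := by gcongr <;> simp_all
    _ = 4 * ‖μv j‖ * ε := by ring

end T0op

section SqInterval

def sqInterval (m : ℕ) : Finset ℤ := Finset.Icc (m ^ 2 + 1) (m ^ 2 + 1 + m)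

theorem card_sqInterval (m : ℕ) : (sqInterval m).card = m + 1 := by
  simp only [sqInterval, Int.card_Icc]
  omega

theorem zero_notMem_sqInterval (m : ℕ) : 0 ∉ sqInterval m := by
  simp only [sqInterval, Finset.mem_Icc, not_and]
  intro h
  nlinarith

theorem pairwise_disjoint_sqInterval :
    Pairwise fun m k => Disjoint (sqInterval m) (sqInterval k) := by
  intro m k hmk
  refine Finset.disjoint_left.2 fun x hm hk => ?_
  simp only [sqInterval, Finset.mem_Icc] at hm hk
  rcases Nat.lt_or_gt_of_ne hmk with h | h
  · have : ((m : ℤ) + 1) ^ 2 ≤ (k : ℤ) ^ 2 := by gcongr; exact_mod_cast h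
    nlinarith
  · have : ((k : ℤ) + 1) ^ 2 ≤ (m : ℤ) ^ 2 := by gcongr; exact_mod_cast h
    nlinarith

end SqInterval

section WeylSequence

variable {n : ℕ} {μv : Fin n → ℂ} {V₀ : ℝ} {L : Fin n → (Kt n →L[ℂ] Kt n)}
  {z : Fin n → ℂ}

theorem norm_indicatorLp_sqInterval (hz : ∀ j, ‖z j‖ = 1) (m : ℕ) :
    ‖indicatorLp (cube n (sqInterval m)) (planeWave z)‖ = √(((m + 1) ^ n : ℕ) : ℝ) := by
  rw [norm_indicatorLp fun x _ => norm_planeWave hz x, card_cube, card_sqInterval]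

theorem norm_T0op_normalized_sub_le [Nonempty (Fin n)] (hL : IsShift L) (hz : ∀ j, ‖z j‖ = 1)
    {lam : ℂ} (hlam : V₀ + ∑ j, (μv j * z j + conj (μv j) * (z j)⁻¹) = lam) (m : ℕ) :
    let u := indicatorLp (cube n (sqInterval m)) (planeWave z)
    ‖T0op μv V₀ L ((‖u‖ : ℂ)⁻¹ • u) - lam • (‖u‖ : ℂ)⁻¹ • u‖
      ≤ 4 * (∑ j, ‖μv j‖) / √((m : ℝ) + 1) := by
  intro u
  have h : ‖T0op μv V₀ L u - lam • u‖ ≤ 4 * (∑ j, ‖μv j‖) * √((sqInterval m).card ^ (n - 1) : ℕ) :=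
    norm_T0op_planeWave_sub_le hL hz hlam _ _
  rw [card_sqInterval] at h
  calc _ = ‖u‖⁻¹ * ‖T0op μv V₀ L u - lam • u‖ := by
        rw [map_smul, smul_comm, ← smul_sub, norm_smul, norm_inv, Complex.norm_real, norm_norm]
    _ ≤ ‖u‖⁻¹ * (4 * (∑ j, ‖μv j‖) * √(((m + 1) ^ (n - 1) : ℕ) : ℝ)) := by gcongr
    _ = 4 * (∑ j, ‖μv j‖) / √((m : ℝ) + 1) := by
        rw [norm_indicatorLp_sqInterval hz, ← pow_sub_one_mul (Fin.pos_iff_nonempty.2 ‹_›).ne',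
          Nat.cast_mul, Real.sqrt_mul (by positivity)]
        field_simp
        push_cast
        ring

theorem exists_orthonormal_T0op_approx_eigen [Nonempty (Fin n)] (hL : IsShift L) {lam : ℝ}
    (hlam : |lam - V₀| ≤ 2 * ∑ j, ‖μv j‖) :
    ∃ ψ : ℕ → Kt n, Orthonormal ℂ ψ ∧ (∀ m, ψ m 0 = 0) ∧
      Tendsto (fun m => ‖T0op μv V₀ L (ψ m) - (lam : ℂ) • ψ m‖) atTop (𝓝 0) := by
  obtain ⟨z, hz, hsum⟩ := exists_unimodular_sum_eq μv hlam
  have hlam' : (V₀ : ℂ) + ∑ j, (μv j * z j + conj (μv j) * (z j)⁻¹) = lam := by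
    rw [hsum]; push_cast; ring
  set u : ℕ → Kt n := fun m => indicatorLp (cube n (sqInterval m)) (planeWave z)
  have hu0 : ∀ m, u m ≠ 0 := fun m =>
    norm_pos_iff.1 (by rw [norm_indicatorLp_sqInterval hz]; positivity)
  refine ⟨fun m => (‖u m‖ : ℂ)⁻¹ • u m, ⟨fun m => norm_smul_inv_norm (hu0 m), fun m k hmk => ?_⟩,
    fun m => ?_, ?_⟩
  · simp only [inner_smul_left, inner_smul_right, mul_zero, u,
      inner_indicatorLp_of_disjoint (disjoint_cube (pairwise_disjoint_sqInterval hmk))]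
  · rw [lp.coeFn_smul, Pi.smul_apply, indicatorLp_apply, if_neg, smul_zero]
    exact fun h0 => zero_notMem_sqInterval m (Fintype.mem_piFinset.1 h0 (Classical.arbitrary _))
  refine squeeze_zero (fun m => norm_nonneg _) (norm_T0op_normalized_sub_le hL hz hlam') ?_
  exact tendsto_const_nhds.div_atTop
    (Real.tendsto_sqrt_atTop.comp (tendsto_natCast_atTop_atTop.atTop_add tendsto_const_nhds))

end WeylSequence

section Iota

variable {n : ℕ} {ι : Ks n →L[ℂ] Kt n}

theorem IsIota.apply_single (hι : IsIota ι) (v : {x : Fin n → ℤ // x ≠ 0}) (a : ℂ) :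
    ι (lp.single 2 v a) = lp.single 2 (v : Fin n → ℤ) a := by
  ext x
  rw [hι]
  split_ifs with hx
  · rw [lp.single_apply_ne _ _ _ (by rintro rfl; exact v.2 hx)]
  · simp only [lp.single_apply, Pi.single_apply, ← Subtype.val_inj]

theorem IsIota.adjoint_apply (hι : IsIota ι) (ψ : Kt n) (v : {x : Fin n → ℤ // x ≠ 0}) :
    adjoint ι ψ v = ψ v := by
  have h := adjoint_inner_right ι (lp.single 2 v 1) ψ
  simpa [hι.apply_single, lp.inner_single_left] using h

theorem IsIota.apply_adjoint (hι : IsIota ι) {ψ : Kt n} (hψ : ψ 0 = 0) :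
    ι (adjoint ι ψ) = ψ := by
  ext x
  rw [hι]
  split_ifs with hx
  · rw [hx, hψ]
  · exact hι.adjoint_apply ψ _

theorem IsIota.norm_adjoint_apply (hι : IsIota ι) {ψ : Kt n} (hψ : ψ 0 = 0) :
    ‖adjoint ι ψ‖ = ‖ψ‖ := by
  rw [@norm_eq_sqrt_re_inner ℂ, @norm_eq_sqrt_re_inner ℂ _ _ _ _ ψ, adjoint_inner_right,
    hι.apply_adjoint hψ]

end Iota

theorem stmt_5_general (n : ℕ) (μv : Fin n → ℂ) (V₀ : ℝ)
    (hμ : (∑ j, ‖μv j‖) ≠ 0)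
    (L : Fin n → (Kt n →L[ℂ] Kt n)) (hL : IsShift L)
    (ι : Ks n →L[ℂ] Kt n) (hι : IsIota ι)
    (lam : ℝ)
    (hlam : lam ∈ Set.Icc (V₀ - 2 * ∑ j, ‖μv j‖)
                          (V₀ + 2 * ∑ j, ‖μv j‖)) :
    ∃ φseq : ℕ → Ks n,
      (∀ m, ‖φseq m‖ = 1) ∧
      (∀ φ : Ks n, Tendsto (fun m => (inner ℂ φ (φseq m) : ℂ)) atTop (𝓝 0)) ∧
      Tendsto (fun m => ‖Tops μv V₀ L ι (φseq m) - (lam : ℂ) • φseq m‖) atTop (𝓝 0) := by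
  obtain ⟨j, -, -⟩ := Finset.exists_ne_zero_of_sum_ne_zero hμ
  have : Nonempty (Fin n) := ⟨j⟩
  have hlam' : |lam - V₀| ≤ 2 * ∑ j, ‖μv j‖ :=
    abs_sub_le_iff.2 ⟨by linarith [hlam.2], by linarith [hlam.1]⟩
  obtain ⟨ψ, hψ, hψ0, hlim⟩ := exists_orthonormal_T0op_approx_eigen hL hlam'
  refine ⟨fun m => adjoint ι (ψ m), fun m => ?_, fun φ => ?_, ?_⟩
  · rw [hι.norm_adjoint_apply (hψ0 m), hψ.1 m]
  · simpa only [adjoint_inner_right, Nat.cofinite_eq_atTop] using hψ.tendsto_inner_right_zero (ι φ)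
  · have herr : ∀ m, Tops μv V₀ L ι (adjoint ι (ψ m)) - (lam : ℂ) • adjoint ι (ψ m)
        = adjoint ι (T0op μv V₀ L (ψ m) - (lam : ℂ) • ψ m) := fun m => by
      rw [Tops, comp_apply, comp_apply, hι.apply_adjoint (hψ0 m), map_sub, map_smul]
    simp only [herr]
    refine squeeze_zero (fun m => norm_nonneg _) (fun m => le_opNorm _ _) ?_
    simpa using hlim.const_mul ‖adjoint ι‖

/-- if `μ ≠ 0` and `λ ∈ [V₀ - 2μ, V₀ + 2μ]`, there is a normalized
sequence in `𝒦` converging weakly to `0` with `‖(T - λ)φ_m‖ → 0`. -/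
theorem stmt_5 (n : ℕ) (hn : 1 ≤ n) (μv : Fin n → ℂ) (V₀ : ℝ)
    (hμ : (∑ j, ‖μv j‖) ≠ 0)
    (L : Fin n → (Kt n →L[ℂ] Kt n)) (hL : IsShift L)
    (ι : Ks n →L[ℂ] Kt n) (hι : IsIota ι)
    (lam : ℝ)
    (hlam : lam ∈ Set.Icc (V₀ - 2 * ∑ j, ‖μv j‖)
                          (V₀ + 2 * ∑ j, ‖μv j‖)) :
    ∃ φseq : ℕ → Ks n,
      (∀ m, ‖φseq m‖ = 1) ∧
      (∀ φ : Ks n, Tendsto (fun m => (inner ℂ φ (φseq m) : ℂ)) atTop (𝓝 0)) ∧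
      Tendsto (fun m => ‖Tops μv V₀ L ι (φseq m) - (lam : ℂ) • φseq m‖) atTop (𝓝 0) :=
  stmt_5_general n μv V₀ hμ L hL ι hι lam hlam
end
end

section
/- Let ν ∈ ℝ and suppose (φ_m) is a sequence in 𝒦 with ‖φ_m‖ = 1 for all m, ⟨φ, φ_m⟩ → 0 for every φ ∈ 𝒦, and ‖(T − ν)φ_m‖ → 0. Then the sequence ψ_m = ιφ_m in 𝒦̃ satisfies ‖ψ_m‖ = 1 for all m, ⟨ψ, ψ_m⟩ → 0 for every ψ ∈ 𝒦̃, and ‖(T̃₀ − ν)ψ_m‖ → 0. -/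
open MeasureTheory Filter Topology ComplexConjugate ContinuousLinearMap
open scoped ENNReal Real

noncomputable section

/-!
The complement of the range of `ι` is the line spanned by `δ₀`, so
`(T̃₀ - ν) ι φ = ι ((T - ν) φ) + ⟪δ₀, (T̃₀ - ν) ι φ⟫ δ₀`. The first term is small by the
Weyl property of `φₘ`, and the coefficient of `δ₀` equals `⟪ι* (T̃₀ - ν)* δ₀, φₘ⟫`, which tends
to zero because `φₘ` is weakly null.
-/

section Compression

variable {𝕜 E F α : Type*} [RCLike 𝕜]
  [NormedAddCommGroup E] [InnerProductSpace 𝕜 E] [CompleteSpace E]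
  [NormedAddCommGroup F] [InnerProductSpace 𝕜 F] [CompleteSpace F]

theorem tendsto_norm_sub_smul_map_of_compression (A : F →L[𝕜] F) (ι : E →L[𝕜] F) (e : F)
    (hι : adjoint ι ∘L ι = 1) (hcompl : ∀ ψ, ι (adjoint ι ψ) + inner 𝕜 e ψ • e = ψ)
    (c : 𝕜) {l : Filter α} {φ : α → E}
    (hweak : ∀ φ' : E, Tendsto (fun m => inner 𝕜 φ' (φ m)) l (𝓝 0))
    (hWeyl : Tendsto (fun m => ‖(adjoint ι ∘L A ∘L ι) (φ m) - c • φ m‖) l (𝓝 0)) :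
    Tendsto (fun m => ‖A (ι (φ m)) - c • ι (φ m)‖) l (𝓝 0) := by
  set B : F →L[𝕜] F := A - c • 1
  have hB : ∀ ψ, B ψ = A ψ - c • ψ := fun ψ => rfl
  have hleft_inv : ∀ x, adjoint ι (ι x) = x := fun x => by
    rw [← comp_apply, hι, one_apply_eq_self]
  have hcompressed : ∀ m, adjoint ι (B (ι (φ m))) = (adjoint ι ∘L A ∘L ι) (φ m) - c • φ m :=
    fun m => by simp only [hB, map_sub, map_smul, hleft_inv, comp_apply]
  have hcoeff : ∀ m, inner 𝕜 e (B (ι (φ m))) = inner 𝕜 (adjoint ι (adjoint B e)) (φ m) :=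
    fun m => by rw [adjoint_inner_left, adjoint_inner_left]
  have hbound : ∀ m, ‖B (ι (φ m))‖ ≤
      ‖ι‖ * ‖(adjoint ι ∘L A ∘L ι) (φ m) - c • φ m‖
        + ‖inner 𝕜 (adjoint ι (adjoint B e)) (φ m)‖ * ‖e‖ := fun m =>
    calc ‖B (ι (φ m))‖
        = ‖ι (adjoint ι (B (ι (φ m)))) + inner 𝕜 e (B (ι (φ m))) • e‖ := by rw [hcompl]
      _ ≤ _ := by
        rw [hcompressed, hcoeff]
        exact (norm_add_le _ _).trans (add_le_add (le_opNorm _ _) (norm_smul _ _).le)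
  have hlim : Tendsto (fun m => ‖ι‖ * ‖(adjoint ι ∘L A ∘L ι) (φ m) - c • φ m‖
      + ‖inner 𝕜 (adjoint ι (adjoint B e)) (φ m)‖ * ‖e‖) l (𝓝 0) := by
    simpa using (hWeyl.const_mul ‖ι‖).add ((hweak _).norm.mul_const ‖e‖)
  exact squeeze_zero (fun m => norm_nonneg _) hbound hlim

end Compression

lemma lp.apply_eq_inner_single {𝕜 X : Type*} [RCLike 𝕜] [DecidableEq X]
    (f : lp (fun _ : X => 𝕜) 2) (x : X) : f x = inner 𝕜 (lp.single 2 x (1 : 𝕜)) f := by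
  simp [lp.inner_single_left, RCLike.inner_apply]

namespace IsIota

variable {n : ℕ} {ι : Ks n →L[ℂ] Kt n}

lemma apply_single_s7 (hι : IsIota ι) (y : {x : Fin n → ℤ // x ≠ 0}) :
    ι (lp.single 2 y (1 : ℂ)) = lp.single 2 y.1 (1 : ℂ) := by
  ext x
  rw [hι]
  by_cases h0 : x = 0
  · rw [dif_pos h0, lp.single_apply_ne _ _ _ (by rintro rfl; exact y.2 h0)]
  · simp only [dif_neg h0, lp.single_apply, Pi.single_apply, Subtype.ext_iff]

lemma adjoint_apply_s7 (hι : IsIota ι) (ψ : Kt n) (y : {x : Fin n → ℤ // x ≠ 0}) :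
    adjoint ι ψ y = ψ y.1 := by
  rw [lp.apply_eq_inner_single, adjoint_inner_right, hι.apply_single_s7, ← lp.apply_eq_inner_single]

lemma adjoint_comp_self (hι : IsIota ι) : adjoint ι ∘L ι = 1 := by
  ext φ y
  rw [comp_apply, hι.adjoint_apply_s7, hι, dif_neg y.2, one_apply_eq_self]

lemma apply_adjoint_add_inner_single_zero (hι : IsIota ι) (ψ : Kt n) :
    ι (adjoint ι ψ) + inner ℂ (lp.single 2 0 (1 : ℂ)) ψ • lp.single 2 0 (1 : ℂ) = ψ := by
  ext x
  rw [← lp.apply_eq_inner_single, lp.coeFn_add, Pi.add_apply, lp.coeFn_smul, Pi.smul_apply, hι]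
  by_cases h0 : x = 0
  · subst h0
    simp
  · simp [h0, hι.adjoint_apply_s7]

end IsIota

theorem stmt_7_general (n : ℕ) (μv : Fin n → ℂ) (V₀ : ℝ)
    (L : Fin n → (Kt n →L[ℂ] Kt n))
    (ι : Ks n →L[ℂ] Kt n) (hι : IsIota ι)
    (ν : ℝ) (φseq : ℕ → Ks n)
    (hnorm : ∀ m, ‖φseq m‖ = 1)
    (hweak : ∀ φ : Ks n, Tendsto (fun m => (inner ℂ φ (φseq m) : ℂ)) atTop (𝓝 0))
    (hWeyl : Tendsto (fun m => ‖Tops μv V₀ L ι (φseq m) - (ν : ℂ) • φseq m‖)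
      atTop (𝓝 0)) :
    (∀ m, ‖ι (φseq m)‖ = 1) ∧
    (∀ ψ : Kt n, Tendsto (fun m => (inner ℂ ψ (ι (φseq m)) : ℂ)) atTop (𝓝 0)) ∧
    Tendsto (fun m => ‖T0op μv V₀ L (ι (φseq m)) - (ν : ℂ) • ι (φseq m)‖)
      atTop (𝓝 0) := by
  refine ⟨fun m => ?_, fun ψ => ?_, ?_⟩
  · rw [(norm_map_iff_adjoint_comp_self ι).mpr hι.adjoint_comp_self, hnorm]
  · simpa only [adjoint_inner_left] using hweak (adjoint ι ψ)
  · exact tendsto_norm_sub_smul_map_of_compression _ ι _ hι.adjoint_comp_self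
      hι.apply_adjoint_add_inner_single_zero _ hweak hWeyl

/-- a normalized weak-null Weyl sequence for `T` at `ν` is mapped
by `ι` to a normalized weak-null Weyl sequence for `T̃₀` at `ν`. -/
theorem stmt_7 (n : ℕ) (hn : 1 ≤ n) (μv : Fin n → ℂ) (V₀ : ℝ)
    (L : Fin n → (Kt n →L[ℂ] Kt n)) (hL : IsShift L)
    (ι : Ks n →L[ℂ] Kt n) (hι : IsIota ι)
    (ν : ℝ) (φseq : ℕ → Ks n)
    (hnorm : ∀ m, ‖φseq m‖ = 1)
    (hweak : ∀ φ : Ks n, Tendsto (fun m => (inner ℂ φ (φseq m) : ℂ)) atTop (𝓝 0))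
    (hWeyl : Tendsto (fun m => ‖Tops μv V₀ L ι (φseq m) - (ν : ℂ) • φseq m‖)
      atTop (𝓝 0)) :
    (∀ m, ‖ι (φseq m)‖ = 1) ∧
    (∀ ψ : Kt n, Tendsto (fun m => (inner ℂ ψ (ι (φseq m)) : ℂ)) atTop (𝓝 0)) ∧
    Tendsto (fun m => ‖T0op μv V₀ L (ι (φseq m)) - (ν : ℂ) • ι (φseq m)‖)
      atTop (𝓝 0) :=
  stmt_7_general n μv V₀ L ι hι ν φseq hnorm hweak hWeyl
end
end
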